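/- arXiv:2210.01513 — 3 statements merged into one kernel-verified Lean document; each statement's English description precedes it below -/
import Mathlib

section
/- Under the SAM recursion for a quadratic loss with b = ηρλ_1², if ‖v_t‖ ≤ b then ‖v_{t+1}‖ ≤ b; i.e., the ball of radius b in gradient space is absorbing. -/
theorem stmt_4 (d : ℕ) (hd : 0 < d) (lam : Fin d → ℝ) (η ρ : ℝ)
    (hη : 0 < η) (hρ : 0 < ρ)
    (hmono : ∀ i j : Fin d, i ≤ j → lam j ≤ lam i)
    (hpos : ∀ i, 0 < lam i)
    (hsmall : ∀ i, η * lam i < 1 / 2)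
    (γ : Fin d → ℝ)
    (hγ : ∀ i, γ i = η * ρ * lam i ^ 2 / (1 - η * lam i))
    (b : ℝ) (hb : b = η * ρ * lam ⟨0, hd⟩ ^ 2)
    (v w : EuclideanSpace ℝ (Fin d)) (hv : v ≠ 0)
    (hup : ∀ i, w i = (1 - η * lam i) * (‖v‖ - γ i) * v i / ‖v‖)
    (hball : ‖v‖ ≤ b) :
    ‖w‖ ≤ b := by
  have hvn : (0:ℝ) < ‖v‖ := norm_pos_iff.mpr hv
  have hb0 : 0 < b := by
    rw [hb]; have := hpos ⟨0, hd⟩; positivity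
  have hfac : ∀ i, |(1 - η * lam i) * (‖v‖ - γ i)| ≤ b := by
    intro i
    have h1 : 0 < 1 - η * lam i := by have := hsmall i; linarith
    have hli : lam i ≤ lam ⟨0, hd⟩ := hmono ⟨0, hd⟩ i (by simp [Fin.le_def])
    have hγi : 0 ≤ γ i := by
      rw [hγ i]
      apply div_nonneg _ h1.le
      have := (hpos i).le
      positivity
    have hkey : (1 - η * lam i) * γ i = η * ρ * lam i ^ 2 := by
      rw [hγ i]; field_simp
    have hbi : η * ρ * lam i ^ 2 ≤ b := by
      rw [hb]
      have h2 : lam i ^ 2 ≤ lam ⟨0, hd⟩ ^ 2 := by nlinarith [hpos i]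
      exact mul_le_mul_of_nonneg_left h2 (by positivity)
    rw [abs_le]
    constructor
    · nlinarith [mul_nonneg h1.le hvn.le]
    · nlinarith [mul_nonneg h1.le hγi, mul_nonneg (mul_pos hη (hpos i)).le hvn.le]
  have hw2 : ∀ i, ‖w i‖ ^ 2 ≤ (b / ‖v‖) ^ 2 * ‖v i‖ ^ 2 := by
    intro i
    have habs : |w i| ≤ b / ‖v‖ * |v i| := by
      rw [hup i]
      rw [abs_div, abs_mul, abs_of_pos hvn]
      rw [div_le_iff₀ hvn]
      calc |(1 - η * lam i) * (‖v‖ - γ i)| * |v i|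
          ≤ b * |v i| := by
            apply mul_le_mul_of_nonneg_right (hfac i) (abs_nonneg _)
        _ = b / ‖v‖ * |v i| * ‖v‖ := by field_simp
    have h2 : ‖w i‖ = |w i| := Real.norm_eq_abs _
    have h3 : ‖v i‖ = |v i| := Real.norm_eq_abs _
    rw [h2, h3]
    have := pow_le_pow_left₀ (abs_nonneg (w i)) habs 2
    calc |w i| ^ 2 ≤ (b / ‖v‖ * |v i|) ^ 2 := this
      _ = (b / ‖v‖) ^ 2 * |v i| ^ 2 := by ring
  have hvsum : ∑ i, ‖v i‖ ^ 2 = ‖v‖ ^ 2 := by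
    rw [EuclideanSpace.norm_eq, Real.sq_sqrt]
    positivity
  have hsum : ∑ i, ‖w i‖ ^ 2 ≤ b ^ 2 := by
    calc ∑ i, ‖w i‖ ^ 2 ≤ ∑ i, (b / ‖v‖) ^ 2 * ‖v i‖ ^ 2 :=
          Finset.sum_le_sum fun i _ => hw2 i
      _ = (b / ‖v‖) ^ 2 * ∑ i, ‖v i‖ ^ 2 := by rw [Finset.mul_sum]
      _ = (b / ‖v‖) ^ 2 * ‖v‖ ^ 2 := by rw [hvsum]
      _ = b ^ 2 := by field_simp
  rw [EuclideanSpace.norm_eq]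
  calc Real.sqrt (∑ i, ‖w i‖ ^ 2) ≤ Real.sqrt (b ^ 2) := Real.sqrt_le_sqrt hsum
    _ = b := Real.sqrt_sq hb0.le
end

section
/- With β_i = ηρλ_i²/(2−ηλ_i) and α_i = ((1−ηλ_1)γ_1 + (1−ηλ_i)γ_i)/((1−ηλ_1)+(1−ηλ_i)), the constants satisfy β_d ≤ … ≤ β_1 ≤ α_d ≤ … ≤ α_2 ≤ α_1 = γ_1 and β_1 ≤ ηρλ_1²; moreover if λ_d > 0 then β_1 < α_d. -/
theorem stmt_5 (d : ℕ) (hd : 0 < d) (lam : Fin d → ℝ) (η ρ : ℝ)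
    (hη : 0 < η) (hρ : 0 < ρ)
    (hmono : ∀ i j : Fin d, i ≤ j → lam j ≤ lam i)
    (hpos : ∀ i, 0 < lam i)
    (hsmall : ∀ i, η * lam i < 1 / 2)
    (γ β α : Fin d → ℝ)
    (hγ : ∀ i, γ i = η * ρ * lam i ^ 2 / (1 - η * lam i))
    (hβ : ∀ i, β i = η * ρ * lam i ^ 2 / (2 - η * lam i))
    (hα : ∀ i, α i = ((1 - η * lam ⟨0, hd⟩) * γ ⟨0, hd⟩ + (1 - η * lam i) * γ i) /
        ((1 - η * lam ⟨0, hd⟩) + (1 - η * lam i))) :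
    (∀ i j : Fin d, i ≤ j → β j ≤ β i) ∧
    (∀ i j : Fin d, i ≤ j → α j ≤ α i) ∧
    (∀ i : Fin d, β ⟨0, hd⟩ ≤ α i) ∧
    α ⟨0, hd⟩ = γ ⟨0, hd⟩ ∧
    β ⟨0, hd⟩ ≤ η * ρ * lam ⟨0, hd⟩ ^ 2 ∧
    (∀ i : Fin d, β ⟨0, hd⟩ < α i) := by
  set o : Fin d := ⟨0, hd⟩ with ho
  have hle : ∀ i : Fin d, lam i ≤ lam o :=
    fun i => hmono o i (Fin.le_def.mpr (Nat.zero_le _))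
  have h1 : ∀ i, 0 < 1 - η * lam i := fun i => by have := hsmall i; linarith
  have h2 : ∀ i, 0 < 2 - η * lam i := fun i => by have := hsmall i; linarith
  have hηl : ∀ i, 0 < η * lam i := fun i => mul_pos hη (hpos i)
  have key : ∀ i, α i = (η * ρ * lam o ^ 2 + η * ρ * lam i ^ 2) /
      ((1 - η * lam o) + (1 - η * lam i)) := by
    intro i
    rw [hα, hγ, hγ]
    congr 1
    rw [← mul_div_assoc, ← mul_div_assoc, mul_div_cancel_left₀ _ (h1 o).ne',
      mul_div_cancel_left₀ _ (h1 i).ne']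
  have hd2 : ∀ i, 0 < (1 - η * lam o) + (1 - η * lam i) :=
    fun i => by have := h1 o; have := h1 i; linarith
  have hβlt : ∀ i : Fin d, β o < α i := by
    intro i
    rw [hβ, key]
    rw [div_lt_div_iff₀ (h2 o) (hd2 i)]
    have hi := hpos i
    have hsi := hsmall i; have hso := hsmall o
    have hηρ := mul_pos hη hρ
    nlinarith [mul_pos hηρ (mul_pos hi hi), mul_pos hηρ (mul_pos (hpos o) (hpos o)),
      mul_pos (hηl i) (mul_pos hηρ (mul_pos (hpos o) (hpos o)))]
  refine ⟨?_, ?_, fun i => (hβlt i).le, ?_, ?_, hβlt⟩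
  · intro i j hij
    rw [hβ i, hβ j, div_le_div_iff₀ (h2 j) (h2 i)]
    have hji := hmono i j hij
    have hηρ := mul_pos hη hρ
    nlinarith [hpos i, hpos j, hsmall i, hsmall j,
      mul_nonneg (mul_pos hη hρ).le (mul_nonneg (sub_nonneg.mpr hji)
        (by nlinarith [hpos i, hpos j, hsmall i, hηl j] : (0:ℝ) ≤ 2 * (lam i + lam j) - η * lam i * lam j))]
  · intro i j hij
    rw [key i, key j, div_le_div_iff₀ (hd2 j) (hd2 i)]
    have hji := hmono i j hij
    have hii := hle i
    have hηρ := mul_pos hη hρ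
    have t1 : 0 ≤ (2 - η * lam o) * (lam i ^ 2 - lam j ^ 2) := by
      apply mul_nonneg (by linarith [hsmall o])
      nlinarith [hpos j]
    have t2 : 0 ≤ η * (lam i - lam j) * (lam o ^ 2 - lam i * lam j) := by
      apply mul_nonneg (mul_nonneg hη.le (by linarith))
      nlinarith [hpos j]
    nlinarith [mul_nonneg hηρ.le (add_nonneg t1 t2)]
  · rw [key, hγ, div_eq_div_iff (hd2 o).ne' (h1 o).ne']
    ring
  · rw [hβ]
    apply div_le_self
    · positivity
    · have := hsmall o; linarith
end

section
/- Under the SAM recursion for a quadratic loss, if ‖v_t‖ ≥ b := ηρλ_1², then ‖v_{t+1}‖ ≤ (1−ηλ_d)‖v_t‖. -/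
theorem stmt_7 (d : ℕ) (hd : 0 < d) (lam : Fin d → ℝ) (η ρ : ℝ)
    (hη : 0 < η) (hρ : 0 < ρ)
    (hmono : ∀ i j : Fin d, i ≤ j → lam j ≤ lam i)
    (hpos : ∀ i, 0 < lam i)
    (hsmall : ∀ i, η * lam i < 1 / 2)
    (γ : Fin d → ℝ)
    (hγ : ∀ i, γ i = η * ρ * lam i ^ 2 / (1 - η * lam i))
    (b : ℝ) (hb : b = η * ρ * lam ⟨0, hd⟩ ^ 2)
    (v w : EuclideanSpace ℝ (Fin d)) (hv : v ≠ 0)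
    (hup : ∀ i, w i = (1 - η * lam i) * (‖v‖ - γ i) * v i / ‖v‖)
    (hbig : b ≤ ‖v‖) :
    ‖w‖ ≤ (1 - η * lam ⟨d - 1, by omega⟩) * ‖v‖ := by
  set c : ℝ := 1 - η * lam ⟨d - 1, by omega⟩ with hc
  have hvpos : 0 < ‖v‖ := norm_pos_iff.mpr hv
  have hcpos : 0 < c := by
    have := hsmall ⟨d - 1, by omega⟩; simp only [hc]; linarith
  have key : ∀ i, |w i| ≤ c * |v i| := by
    intro i
    have h1 : (0:ℝ) < 1 - η * lam i := by have := hsmall i; linarith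
    have hle0 : lam i ≤ lam ⟨0, hd⟩ := hmono ⟨0, hd⟩ i (by simp [Fin.le_def])
    have hled : lam ⟨d - 1, by omega⟩ ≤ lam i := by
      apply hmono i ⟨d - 1, by omega⟩
      simp [Fin.le_def]
      omega
    have hcle : 1 - η * lam i ≤ c := by
      simp only [hc]; nlinarith
    have hγ0 : 0 ≤ γ i := by
      rw [hγ i]
      apply div_nonneg _ (le_of_lt h1)
      positivity
    have hγle : γ i ≤ 2 * ‖v‖ := by
      rw [hγ i]
      have hnum : η * ρ * lam i ^ 2 ≤ b := by
        rw [hb]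
        have h0 : (0:ℝ) ≤ lam i := le_of_lt (hpos i)
        have h2 := pow_le_pow_left₀ h0 hle0 2
        exact mul_le_mul_of_nonneg_left h2 (by positivity)
      have h2 : (1:ℝ)/2 < 1 - η * lam i := by have := hsmall i; linarith
      calc η * ρ * lam i ^ 2 / (1 - η * lam i)
          ≤ b / (1/2) := by
            apply div_le_div₀ (by rw [hb]; positivity) hnum (by norm_num) (le_of_lt h2)
        _ = 2 * b := by ring
        _ ≤ 2 * ‖v‖ := by linarith
    have habs : |‖v‖ - γ i| ≤ ‖v‖ := abs_le.mpr ⟨by linarith, by linarith⟩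
    rw [hup i, abs_div, abs_mul, abs_mul, abs_of_pos h1, abs_of_pos hvpos]
    rw [div_le_iff₀ hvpos]
    calc (1 - η * lam i) * |‖v‖ - γ i| * |v i|
        ≤ c * ‖v‖ * |v i| := by
          apply mul_le_mul _ le_rfl (abs_nonneg _) (by positivity)
          exact mul_le_mul hcle habs (abs_nonneg _) (le_of_lt hcpos)
      _ = c * |v i| * ‖v‖ := by ring
  have hwn : ‖w‖ = Real.sqrt (∑ i, |w i| ^ 2) := by
    simp [EuclideanSpace.norm_eq, Real.norm_eq_abs]
  have hvn : ‖v‖ ^ 2 = ∑ i, |v i| ^ 2 := by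
    rw [EuclideanSpace.norm_eq, Real.sq_sqrt (by positivity)]
    simp [Real.norm_eq_abs]
  rw [hwn]
  have hsum : ∑ i, |w i| ^ 2 ≤ (c * ‖v‖) ^ 2 := by
    have : ∑ i, |w i| ^ 2 ≤ ∑ i, c ^ 2 * |v i| ^ 2 := by
      apply Finset.sum_le_sum
      intro i _
      have := key i
      nlinarith [abs_nonneg (w i), abs_nonneg (v i)]
    rw [← Finset.mul_sum, ← hvn] at this
    calc ∑ i, |w i| ^ 2 ≤ c ^ 2 * ‖v‖ ^ 2 := this
      _ = (c * ‖v‖) ^ 2 := by ring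
  calc Real.sqrt (∑ i, |w i| ^ 2) ≤ Real.sqrt ((c * ‖v‖) ^ 2) := Real.sqrt_le_sqrt hsum
    _ = c * ‖v‖ := Real.sqrt_sq (by positivity)
end
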